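/- arXiv:0706.3441 — 2 statements merged into one kernel-verified Lean document; each statement's English description precedes it below -/
import Mathlib

section
/- Let K be an H-graded field, L ⊆ K a graded subfield with K₁ = L₁ (so f_{K/L} = 1). Then L = ⊕_{r ∈ ρ(L^×)} K_r, and the map L ↦ ρ(L^×) is an inclusion-preserving bijection between graded subfields L of K with f_{K/L} = 1 and subgroups of ρ(K^×); moreover K/L is a finite extension if and only if the index of ρ(L^×) in ρ(K^×) is finite, in which case [K:L] equals that index. -/
open scoped DirectSum

/-- An `H`-graded field: a nonzero commutative ring with an internal grading by the
commutative group `H` in which every nonzero homogeneous element is invertible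
(with homogeneous inverse). -/
structure GradedField (H : Type*) [CommGroup H] [DecidableEq H] (K : Type*) [CommRing K] where
  comp : H → AddSubgroup K
  one_mem : (1 : K) ∈ comp 1
  mul_mem : ∀ {g h : H} {x y : K}, x ∈ comp g → y ∈ comp h → x * y ∈ comp (g * h)
  isInternal : DirectSum.IsInternal fun h : H => comp h
  zero_ne_one : (0 : K) ≠ 1
  inv_mem : ∀ {h : H} {x : K}, x ∈ comp h → x ≠ 0 → ∃ y ∈ comp h⁻¹, x * y = 1

namespace GradedField

variable {H : Type*} [CommGroup H] [DecidableEq H] {K : Type*} [CommRing K] (F : GradedField H K)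

/-- A homogeneous element. -/
def Homogeneous (x : K) : Prop := ∃ h, x ∈ F.comp h

/-- A subring is graded if each of its elements is a sum of homogeneous elements of the
subring. -/
def IsGradedSubring (R : Subring K) : Prop :=
  ∀ x ∈ R, x ∈ AddSubgroup.closure {y : K | y ∈ R ∧ F.Homogeneous y}

/-- A graded subfield: a graded subring closed under inverses of nonzero homogeneous
elements. -/
structure IsGradedSubfield (L : Subring K) : Prop where
  graded : F.IsGradedSubring L
  inv_mem : ∀ x ∈ L, F.Homogeneous x → x ≠ 0 → Ring.inverse x ∈ L

/-- A graded valuation ring of the graded subfield `L`: a graded subring `R ⊆ L` such that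
every nonzero homogeneous element of `L` lies in `R` or has its inverse in `R`. -/
def IsGradedValRing (L R : Subring K) : Prop :=
  R ≤ L ∧ F.IsGradedSubring R ∧
    ∀ x ∈ L, F.Homogeneous x → x ≠ 0 → (x ∈ R ∨ Ring.inverse x ∈ R)

/-- The identity component `K₁`, as a subring. -/
def oneComponent : Subring K where
  carrier := F.comp 1
  one_mem' := F.one_mem
  mul_mem' := fun ha hb => by simpa using F.mul_mem ha hb
  add_mem' := fun ha hb => (F.comp 1).add_mem ha hb
  zero_mem' := (F.comp 1).zero_mem
  neg_mem' := fun ha => (F.comp 1).neg_mem ha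

theorem mem_oneComponent {x : K} : x ∈ F.oneComponent ↔ x ∈ F.comp 1 := Iff.rfl

/-- The value group `ρ(L^×) ⊆ H` of a graded subfield `L`. -/
def valueGroup (L : Subring K)
    (hL : ∀ x ∈ L, F.Homogeneous x → x ≠ 0 → Ring.inverse x ∈ L) : Subgroup H where
  carrier := {h | ∃ x ∈ F.comp h, x ≠ 0 ∧ x ∈ L}
  one_mem' := ⟨1, F.one_mem, Ne.symm F.zero_ne_one, L.one_mem⟩
  mul_mem' := by
    rintro g h ⟨x, hx, hx0, hxL⟩ ⟨y, hy, hy0, hyL⟩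
    obtain ⟨x', hx', hxx'⟩ := F.inv_mem hx hx0
    obtain ⟨y', hy', hyy'⟩ := F.inv_mem hy hy0
    refine ⟨x * y, F.mul_mem hx hy, ?_, L.mul_mem hxL hyL⟩
    intro h0
    have h1 : x * y * (x' * y') = 1 := by rw [mul_mul_mul_comm, hxx', hyy', one_mul]
    rw [h0, zero_mul] at h1
    exact F.zero_ne_one h1
  inv_mem' := by
    rintro g ⟨x, hx, hx0, hxL⟩
    obtain ⟨y, hy, hxy⟩ := F.inv_mem hx hx0
    have hu : IsUnit x := IsUnit.of_mul_eq_one y hxy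
    have hyx : Ring.inverse x = y := by
      calc Ring.inverse x = Ring.inverse x * (x * y) := by rw [hxy, mul_one]
        _ = Ring.inverse x * x * y := by ring
        _ = y := by rw [Ring.inverse_mul_cancel x hu, one_mul]
    refine ⟨y, hy, ?_, ?_⟩
    · intro h0; rw [h0, mul_zero] at hxy; exact F.zero_ne_one hxy
    · rw [← hyx]; exact hL x hxL ⟨g, hx⟩ hx0

/-- The value group `ρ(K^×)` of the whole graded field. -/
def fullValueGroup : Subgroup H :=
  F.valueGroup ⊤ (fun _ _ _ _ => Subring.mem_top _)

/-- `K₁` as a module over `L₁ = K₁ ∩ L`. -/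
def oneSubmodule (L : Subring K) : Submodule ↥(F.oneComponent ⊓ L) K where
  carrier := F.comp 1
  add_mem' := fun ha hb => (F.comp 1).add_mem ha hb
  zero_mem' := (F.comp 1).zero_mem
  smul_mem' := fun c x hx => by
    have hc : (c : K) ∈ F.comp 1 := ((Subring.mem_inf).mp c.2).1
    have := F.mul_mem hc hx
    simpa [Subring.smul_def] using this

/-- A graded automorphism: a ring automorphism preserving each graded component. -/
def IsGradedAut (σ : RingAut K) : Prop := ∀ (h : H) (x : K), x ∈ F.comp h → σ x ∈ F.comp h

end GradedField

/-- The fixed subring `K^G` of a group of ring automorphisms. -/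
def fixedSubring {K : Type*} [CommRing K] (G : Subgroup (RingAut K)) : Subring K where
  carrier := {x | ∀ σ ∈ G, σ x = x}
  one_mem' := fun σ _ => map_one σ
  mul_mem' := fun ha hb σ hσ => by rw [map_mul, ha σ hσ, hb σ hσ]
  add_mem' := fun ha hb σ hσ => by rw [map_add, ha σ hσ, hb σ hσ]
  zero_mem' := fun σ _ => map_zero σ
  neg_mem' := fun ha σ hσ => by rw [map_neg, ha σ hσ]

theorem mem_fixedSubring {K : Type*} [CommRing K] {G : Subgroup (RingAut K)} {x : K} :
    x ∈ fixedSubring G ↔ ∀ σ ∈ G, σ x = x := Iff.rfl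


namespace GradedField

variable {H : Type*} [CommGroup H] [DecidableEq H] {K : Type*} [CommRing K]
variable (F : GradedField H K)

/-- Decomposition of an element into its homogeneous components. -/
noncomputable def decompose (x : K) : ⨁ h : H, ↥(F.comp h) :=
  (Equiv.ofBijective _ F.isInternal).symm x

/-- The degree-`h` homogeneous component of `x`. -/
noncomputable def component (h : H) (x : K) : K := (F.decompose x h : K)

/-- The inertia subgroup of `G`: graded automorphisms in `G` acting trivially on `K₁`. -/
def inertia (G : Subgroup (RingAut K)) : Subgroup (RingAut K) where
  carrier := {σ | σ ∈ G ∧ ∀ x ∈ F.comp 1, σ x = x}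
  one_mem' := ⟨G.one_mem, fun _ _ => rfl⟩
  mul_mem' := fun {a b} ha hb => ⟨G.mul_mem ha.1 hb.1, fun x hx => by
    show a (b x) = x
    rw [hb.2 x hx, ha.2 x hx]⟩
  inv_mem' := fun {a} ha => ⟨G.inv_mem ha.1, fun x hx => by
    conv_lhs => rw [← ha.2 x hx]
    exact a.symm_apply_apply x⟩

theorem mem_inertia {G : Subgroup (RingAut K)} {σ : RingAut K} :
    σ ∈ F.inertia G ↔ σ ∈ G ∧ ∀ x ∈ F.comp 1, σ x = x := Iff.rfl

end GradedField

/-- A subring `S` containing a subring `L`, viewed as an `L`-submodule of the ambient ring. -/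
def Subring.toSubmoduleOver {K : Type*} [CommRing K] (L S : Subring K) (hLS : L ≤ S) :
    Submodule ↥L K where
  carrier := S
  add_mem' := fun ha hb => S.add_mem ha hb
  zero_mem' := S.zero_mem
  smul_mem' := fun c x hx => S.mul_mem (hLS c.2) hx

section ZR

variable {H : Type*} [CommGroup H] [DecidableEq H] {K : Type*} [CommRing K]

/-- The Zariski–Riemann space of graded valuation rings of `K` containing `k₀`. -/
def GradedField.ZR (F : GradedField H K) (k₀ : Subring K) : Type _ :=
  {O : Subring K // F.IsGradedValRing ⊤ O ∧ k₀ ≤ O}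

/-- The set of homogeneous units (nonzero homogeneous elements) of `K`. -/
def GradedField.HomogUnits (F : GradedField H K) : Type _ :=
  {x : K // x ≠ 0 ∧ F.Homogeneous x}

open Classical in
/-- The embedding of the Zariski–Riemann space into `{0,1}^{K^×}` via characteristic
functions. -/
noncomputable def GradedField.chi (F : GradedField H K) (k₀ : Subring K) (O : F.ZR k₀) :
    F.HomogUnits → Bool :=
  fun x => decide (x.1 ∈ O.1)

/-- Basic open sets `P{F}∖{G}` of the constructible topology, for finite sets `F`, `G` of
homogeneous units. -/
def GradedField.constructibleBasis (F : GradedField H K) (k₀ : Subring K) :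
    Set (Set (F.ZR k₀)) :=
  {s | ∃ Fs Gs : Finset K, (∀ a ∈ Fs, a ≠ 0 ∧ F.Homogeneous a) ∧
    (∀ b ∈ Gs, b ≠ 0 ∧ F.Homogeneous b) ∧
    s = {O : F.ZR k₀ | (∀ a ∈ Fs, a ∈ O.1) ∧ ∀ b ∈ Gs, b ∉ O.1}}

/-- The constructible topology on the Zariski–Riemann space. -/
def GradedField.constructibleTop (F : GradedField H K) (k₀ : Subring K) :
    TopologicalSpace (F.ZR k₀) :=
  TopologicalSpace.generateFrom (F.constructibleBasis k₀)


universe u v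

/-!
Since `K₁ ⊆ L`, a graded subfield `L` contains a whole component `K_r` as soon as it contains
one nonzero element `x ∈ K_r` (every `y ∈ K_r` is `(y x⁻¹) x` with `y x⁻¹ ∈ K₁`), so `L` is the
sum of the components whose degrees lie in `ρ(L^×)`; conversely the sum of the components over
any subgroup `V ⊆ H` is a graded subfield with value group `V ∩ ρ(K^×)`. Nonzero homogeneous
elements of degrees running through a transversal of `ρ(K^×) / ρ(L^×)` form an `L`-basis of `K`:
they span because the ratio of a homogeneous element and the basis element of the same coset
lies in `L`, and they are independent by comparing homogeneous components of a relation.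
-/

namespace GradedField

variable {H : Type*} [CommGroup H] [DecidableEq H] {K : Type*} [CommRing K] (F : GradedField H K)

noncomputable instance decomposition : DirectSum.Decomposition F.comp where
  decompose' := F.decompose
  left_inv := (Equiv.ofBijective _ F.isInternal).right_inv
  right_inv := (Equiv.ofBijective _ F.isInternal).left_inv

theorem component_eq_decompose (h : H) (x : K) :
    F.component h x = (DirectSum.decompose F.comp x h : K) := rfl

theorem component_of_mem_same {h : H} {x : K} (hx : x ∈ F.comp h) : F.component h x = x :=
  DirectSum.decompose_of_mem_same F.comp hx

theorem component_of_mem_ne {g h : H} {x : K} (hx : x ∈ F.comp h) (hne : h ≠ g) :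
    F.component g x = 0 :=
  DirectSum.decompose_of_mem_ne F.comp hx hne

theorem component_zero (h : H) : F.component h 0 = 0 := by
  simp [component_eq_decompose]

theorem component_add (h : H) (x y : K) :
    F.component h (x + y) = F.component h x + F.component h y := by
  simp [component_eq_decompose]

theorem component_neg (h : H) (x : K) : F.component h (-x) = -F.component h x := by
  rw [eq_neg_iff_add_eq_zero, ← component_add, neg_add_cancel, component_zero]

theorem component_sum {ι : Type*} (h : H) (s : Finset ι) (f : ι → K) :
    F.component h (∑ i ∈ s, f i) = ∑ i ∈ s, F.component h (f i) := by
  simp [component_eq_decompose, DirectSum.decompose_sum]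

theorem exists_component_ne_zero {x : K} (hx : x ≠ 0) : ∃ h, F.component h x ≠ 0 := by
  by_contra! hzero
  refine hx ((DirectSum.decompose F.comp).injective ?_)
  ext h
  simpa [component_eq_decompose] using hzero h

theorem component_mul_of_mem_right {r : H} {c : K} (hc : c ∈ F.comp r) (g : H) (y : K) :
    F.component g (y * c) = F.component (g / r) y * c := by
  induction y using DirectSum.Decomposition.inductionOn F.comp with
  | zero => simp [component_zero]
  | @homogeneous s y =>
    by_cases hg : s * r = g
    · subst hg
      rw [mul_div_cancel_right, F.component_of_mem_same y.2,
        F.component_of_mem_same (F.mul_mem y.2 hc)]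
    · rw [F.component_of_mem_ne (F.mul_mem y.2 hc) hg,
        F.component_of_mem_ne y.2 fun hs => hg (by rw [hs, div_mul_cancel]), zero_mul]
  | add y z hy hz => rw [add_mul, component_add, component_add, hy, hz, add_mul]

theorem isUnit_of_mem {h : H} {x : K} (hx : x ∈ F.comp h) (hx0 : x ≠ 0) : IsUnit x :=
  let ⟨y, _, hxy⟩ := F.inv_mem hx hx0
  IsUnit.of_mul_eq_one y hxy

theorem inverse_mem {h : H} {x : K} (hx : x ∈ F.comp h) : Ring.inverse x ∈ F.comp h⁻¹ := by
  by_cases hx0 : x = 0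
  · simp [hx0]
  obtain ⟨y, hy, hxy⟩ := F.inv_mem hx hx0
  have hinv : Ring.inverse x = y := by
    simpa [hxy] using Ring.inverse_mul_cancel_left x y (IsUnit.of_mul_eq_one y hxy)
  rwa [hinv]

theorem mem_fullValueGroup {h : H} : h ∈ F.fullValueGroup ↔ ∃ x ∈ F.comp h, x ≠ 0 :=
  ⟨fun ⟨x, hx, hx0, _⟩ => ⟨x, hx, hx0⟩, fun ⟨x, hx, hx0⟩ => ⟨x, hx, hx0, trivial⟩⟩

theorem valueGroup_mono {L L' : Subring K}
    (hL : ∀ x ∈ L, F.Homogeneous x → x ≠ 0 → Ring.inverse x ∈ L)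
    (hL' : ∀ x ∈ L', F.Homogeneous x → x ≠ 0 → Ring.inverse x ∈ L') (hle : L ≤ L') :
    F.valueGroup L hL ≤ F.valueGroup L' hL' :=
  fun _ ⟨x, hx, hx0, hxL⟩ => ⟨x, hx, hx0, hle hxL⟩

def homogeneousIn (V : Subgroup H) : Submonoid K where
  carrier := {y | ∃ r ∈ V, y ∈ F.comp r}
  one_mem' := ⟨1, V.one_mem, F.one_mem⟩
  mul_mem' := fun ⟨r, hr, hx⟩ ⟨s, hs, hy⟩ => ⟨r * s, V.mul_mem hr hs, F.mul_mem hx hy⟩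

/-- `⊕_{r ∈ V} K_r`. -/
def subringOfDegrees (V : Subgroup H) : Subring K :=
  Subring.closure (F.homogeneousIn V)

theorem mem_subringOfDegrees {V : Subgroup H} {x : K} :
    x ∈ F.subringOfDegrees V ↔ x ∈ AddSubgroup.closure {y : K | ∃ r ∈ V, y ∈ F.comp r} := by
  rw [subringOfDegrees, Subring.mem_closure_iff, Submonoid.closure_eq]
  rfl

theorem mem_subringOfDegrees_of_mem {V : Subgroup H} {r : H} (hr : r ∈ V) {x : K}
    (hx : x ∈ F.comp r) : x ∈ F.subringOfDegrees V :=
  Subring.subset_closure ⟨r, hr, hx⟩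

theorem subringOfDegrees_mono {V W : Subgroup H} (hVW : V ≤ W) :
    F.subringOfDegrees V ≤ F.subringOfDegrees W :=
  Subring.closure_mono fun _ ⟨r, hr, hy⟩ => ⟨r, hVW hr, hy⟩

theorem component_eq_zero_of_mem_subringOfDegrees {V : Subgroup H} {x : K}
    (hx : x ∈ F.subringOfDegrees V) {h : H} (hh : h ∉ V) : F.component h x = 0 := by
  rw [mem_subringOfDegrees] at hx
  induction hx using AddSubgroup.closure_induction with
  | mem y hy =>
    obtain ⟨r, hr, hy⟩ := hy
    exact F.component_of_mem_ne hy (ne_of_mem_of_not_mem hr hh)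
  | zero => exact F.component_zero h
  | add y z _ _ hy hz => rw [component_add, hy, hz, add_zero]
  | neg y _ hy => rw [component_neg, hy, neg_zero]

theorem mem_of_mem_subringOfDegrees {V : Subgroup H} {h : H} {x : K} (hx : x ∈ F.comp h)
    (hx0 : x ≠ 0) (hxV : x ∈ F.subringOfDegrees V) : h ∈ V := by
  by_contra hh
  rw [← F.component_of_mem_same hx, F.component_eq_zero_of_mem_subringOfDegrees hxV hh] at hx0
  exact hx0 rfl

theorem oneComponent_le_subringOfDegrees (V : Subgroup H) :
    F.oneComponent ≤ F.subringOfDegrees V :=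
  fun _ hx => F.mem_subringOfDegrees_of_mem V.one_mem hx

theorem isGradedSubfield_subringOfDegrees (V : Subgroup H) :
    F.IsGradedSubfield (F.subringOfDegrees V) where
  graded x hx := by
    refine AddSubgroup.closure_mono ?_ (F.mem_subringOfDegrees.mp hx)
    rintro y ⟨r, hr, hy⟩
    exact ⟨F.mem_subringOfDegrees_of_mem hr hy, r, hy⟩
  inv_mem := by
    rintro x hxV ⟨h, hx⟩ hx0
    exact F.mem_subringOfDegrees_of_mem (V.inv_mem (F.mem_of_mem_subringOfDegrees hx hx0 hxV))
      (F.inverse_mem hx)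

theorem valueGroup_subringOfDegrees (V : Subgroup H) :
    F.valueGroup (F.subringOfDegrees V) (F.isGradedSubfield_subringOfDegrees V).inv_mem =
      V ⊓ F.fullValueGroup := by
  ext h
  constructor
  · rintro ⟨x, hx, hx0, hxV⟩
    exact ⟨F.mem_of_mem_subringOfDegrees hx hx0 hxV, x, hx, hx0, trivial⟩
  · rintro ⟨hV, x, hx, hx0, -⟩
    exact ⟨x, hx, hx0, F.mem_subringOfDegrees_of_mem hV hx⟩

variable {F} {L : Subring K}

theorem mem_of_mem_valueGroup (hL : ∀ x ∈ L, F.Homogeneous x → x ≠ 0 → Ring.inverse x ∈ L)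
    (hf : F.oneComponent ≤ L) {r : H} (hr : r ∈ F.valueGroup L hL) {y : K}
    (hy : y ∈ F.comp r) : y ∈ L := by
  obtain ⟨x, hx, hx0, hxL⟩ := hr
  have hyx : y * Ring.inverse x ∈ F.comp 1 := by
    simpa using F.mul_mem hy (F.inverse_mem hx)
  rw [← Ring.inverse_mul_cancel_right x y (F.isUnit_of_mem hx hx0)]
  exact L.mul_mem (hf hyx) hxL

theorem eq_subringOfDegrees_valueGroup (hL : F.IsGradedSubfield L) (hf : F.oneComponent ≤ L) :
    L = F.subringOfDegrees (F.valueGroup L hL.inv_mem) := by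
  refine le_antisymm (fun x hx => F.mem_subringOfDegrees.mpr ?_) ?_
  · refine AddSubgroup.closure_mono ?_ (hL.graded x hx)
    rintro y ⟨hyL, h, hy⟩
    by_cases hy0 : y = 0
    · exact ⟨1, (F.valueGroup L hL.inv_mem).one_mem, hy0 ▸ zero_mem _⟩
    · exact ⟨h, ⟨y, hy, hy0, hyL⟩, hy⟩
  · exact Subring.closure_le.mpr fun y ⟨r, hr, hy⟩ => mem_of_mem_valueGroup hL.inv_mem hf hr hy

variable {V : Subgroup H} {ι : Type*} {d : ι → H} {b : ι → K}

theorem linearIndependent_of_degrees (hL : L ≤ F.subringOfDegrees V)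
    (hb : ∀ i, b i ∈ F.comp (d i)) (hb0 : ∀ i, b i ≠ 0) (hd : ∀ i j, d i / d j ∈ V → i = j) :
    LinearIndependent L b := by
  classical
  rw [linearIndependent_iff']
  intro s g hsum i hi
  by_contra hgi
  obtain ⟨v, hv⟩ := F.exists_component_ne_zero (Subtype.coe_ne_coe.mpr hgi)
  have hvV : v ∈ V := by
    by_contra hvV
    exact hv (F.component_eq_zero_of_mem_subringOfDegrees (hL (g i).2) hvV)
  -- the only term of the relation with a nonzero component in degree `v * d i` is the `i`-th
  have hcomp : F.component (v * d i) (∑ c ∈ s, g c • b c) = F.component v (g i) * b i := by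
    rw [component_sum, Finset.sum_eq_single i]
    · rw [Subring.smul_def, smul_eq_mul, F.component_mul_of_mem_right (hb i), mul_div_cancel_right]
    · intro c _ hci
      rw [Subring.smul_def, smul_eq_mul, F.component_mul_of_mem_right (hb c),
        F.component_eq_zero_of_mem_subringOfDegrees (hL (g c).2), zero_mul]
      rw [mul_div_assoc, V.mul_mem_cancel_left hvV]
      exact fun hic => hci (hd i c hic).symm
    · exact fun his => absurd hi his
  rw [hsum, component_zero] at hcomp
  exact hv ((F.isUnit_of_mem (hb i) (hb0 i)).mul_left_eq_zero.mp hcomp.symm)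

theorem span_range_eq_top_of_degrees (hL : F.subringOfDegrees V ≤ L)
    (hb : ∀ i, b i ∈ F.comp (d i)) (hb0 : ∀ i, b i ≠ 0)
    (hd : ∀ h ∈ F.fullValueGroup, ∃ i, h / d i ∈ V) :
    Submodule.span L (Set.range b) = ⊤ := by
  refine Submodule.eq_top_iff'.mpr fun x => ?_
  induction x using DirectSum.Decomposition.inductionOn F.comp with
  | zero => exact zero_mem _
  | add x y hx hy => exact add_mem hx hy
  | @homogeneous h x =>
    by_cases hx0 : (x : K) = 0
    · rw [hx0]; exact zero_mem _
    obtain ⟨i, hi⟩ := hd h (F.mem_fullValueGroup.mpr ⟨x, x.2, hx0⟩)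
    have hcoeff : (x : K) * Ring.inverse (b i) ∈ L := by
      refine hL (F.mem_subringOfDegrees_of_mem hi ?_)
      simpa [div_eq_mul_inv] using F.mul_mem x.2 (F.inverse_mem (hb i))
    have hx : (x : K) = (⟨_, hcoeff⟩ : L) • b i :=
      (Ring.inverse_mul_cancel_right _ _ (F.isUnit_of_mem (hb i) (hb0 i))).symm
    rw [hx]
    exact Submodule.smul_mem _ _ (Submodule.subset_span ⟨i, rfl⟩)

end GradedField

theorem QuotientGroup.out_div_out_mem_iff {G : Type*} [CommGroup G] {S V : Subgroup G}
    (i j : S ⧸ V.subgroupOf S) : (i.out : G) / j.out ∈ V ↔ i = j := by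
  rw [← Subgroup.coe_div, ← Subgroup.mem_subgroupOf, ← QuotientGroup.eq_iff_div_mem,
    QuotientGroup.out_eq', QuotientGroup.out_eq']

theorem QuotientGroup.exists_div_out_mem {G : Type*} [CommGroup G] {S V : Subgroup G} {g : G}
    (hg : g ∈ S) : ∃ i : S ⧸ V.subgroupOf S, g / i.out ∈ V := by
  refine ⟨(⟨g, hg⟩ : S), ?_⟩
  have hmem := QuotientGroup.eq_iff_div_mem.mp (QuotientGroup.out_eq' ((⟨g, hg⟩ : S) : S ⧸ V.subgroupOf S)).symm
  rwa [Subgroup.mem_subgroupOf, Subgroup.coe_div] at hmem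

theorem GradedField.lift_rank_eq_index {H : Type u} [CommGroup H] [DecidableEq H]
    {K : Type v} [CommRing K] (F : GradedField H K) {L : Subring K}
    (hL : F.IsGradedSubfield L) (hf : F.oneComponent ≤ L) :
    Cardinal.lift.{u} (Module.rank ↥L K) =
      Cardinal.lift.{v}
        (Cardinal.mk
          (↥F.fullValueGroup ⧸ (F.valueGroup L hL.inv_mem).subgroupOf F.fullValueGroup)) := by
  have : Nontrivial K := nontrivial_of_ne 0 1 F.zero_ne_one
  have hLV := F.eq_subringOfDegrees_valueGroup hL hf
  choose b hb hb0 using fun c : ↥F.fullValueGroup ⧸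
      (F.valueGroup L hL.inv_mem).subgroupOf F.fullValueGroup => F.mem_fullValueGroup.mp c.out.2
  have hli := linearIndependent_of_degrees hLV.le hb hb0 fun i j =>
    (QuotientGroup.out_div_out_mem_iff i j).mp
  have hspan := span_range_eq_top_of_degrees hLV.ge hb hb0 fun _ =>
    QuotientGroup.exists_div_out_mem
  exact (Module.Basis.mk hli hspan.ge).mk_eq_rank.symm

/-- Let `L` be a graded subfield of an `H`-graded field `K` with `K₁ = L₁` (i.e.
`f_{K/L} = 1`).  Then `L = ⊕_{r ∈ ρ(L^×)} K_r`, and `L ↦ ρ(L^×)` is an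
inclusion-preserving bijection between graded subfields with `f = 1` and subgroups of
`ρ(K^×)`; moreover `[K:L]` equals the index of `ρ(L^×)` in `ρ(K^×)` (as cardinals, so
`K/L` is finite iff the index is finite). -/
theorem GradedField.residually_trivial_subfields {H : Type u} [CommGroup H] [DecidableEq H]
    {K : Type v} [CommRing K] (F : GradedField H K) (L : Subring K)
    (hL : F.IsGradedSubfield L) (hf : F.oneComponent ≤ L) :
    -- `L = ⊕_{r ∈ ρ(L^×)} K_r`
    (∀ x : K, x ∈ L ↔
      x ∈ AddSubgroup.closure {y : K | ∃ r ∈ F.valueGroup L hL.inv_mem, y ∈ F.comp r}) ∧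
    -- injectivity of `L ↦ ρ(L^×)`
    (∀ L' : Subring K, ∀ hL' : F.IsGradedSubfield L', F.oneComponent ≤ L' →
      F.valueGroup L' hL'.inv_mem = F.valueGroup L hL.inv_mem → L' = L) ∧
    -- surjectivity of `L ↦ ρ(L^×)` onto subgroups of `ρ(K^×)`
    (∀ V : Subgroup H, V ≤ F.fullValueGroup →
      ∃ (L' : Subring K) (hL' : F.IsGradedSubfield L'),
        F.oneComponent ≤ L' ∧ F.valueGroup L' hL'.inv_mem = V) ∧
    -- inclusion-preserving in both directions
    (∀ L' : Subring K, ∀ hL' : F.IsGradedSubfield L', F.oneComponent ≤ L' →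
      (L ≤ L' ↔ F.valueGroup L hL.inv_mem ≤ F.valueGroup L' hL'.inv_mem)) ∧
    -- `[K:L]` equals the index of the value groups
    Cardinal.lift.{u} (Module.rank ↥L K) =
      Cardinal.lift.{v}
        (Cardinal.mk
          (↥F.fullValueGroup ⧸ (F.valueGroup L hL.inv_mem).subgroupOf F.fullValueGroup)) := by
  have hLV := F.eq_subringOfDegrees_valueGroup hL hf
  refine ⟨fun x => ?_, ?_, ?_, ?_, F.lift_rank_eq_index hL hf⟩
  · conv_lhs => rw [hLV]
    exact F.mem_subringOfDegrees
  · intro L' hL' hf' hV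
    rw [eq_subringOfDegrees_valueGroup hL' hf', hV, ← hLV]
  · intro V hV
    exact ⟨_, F.isGradedSubfield_subringOfDegrees V, F.oneComponent_le_subringOfDegrees V,
      (F.valueGroup_subringOfDegrees V).trans (inf_eq_left.mpr hV)⟩
  · intro L' hL' hf'
    refine ⟨F.valueGroup_mono hL.inv_mem hL'.inv_mem, fun hle => ?_⟩
    rw [hLV, eq_subringOfDegrees_valueGroup hL' hf']
    exact F.subringOfDegrees_mono hle
end ZR
end

section
/- Let A₁ be a valuation ring of a field K₁ of finite degree f over a subfield L₁. Then for every nonzero z ∈ A₁, z^{f!} ∈ A₁^× · (A₁ ∩ L₁). -/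
/-- Let `A₁` be a valuation ring of a field `K₁` of finite degree `f` over a subfield `L₁`.
Then every nonzero `z ∈ A₁` satisfies `z ^ f! = u * t` with `u` a unit of `A₁` and
`t ∈ L₁ ∩ A₁`. -/
theorem pow_factorial_eq_unit_mul_base {K₁ : Type*} [Field K₁] (L₁ : Subfield K₁)
    [FiniteDimensional ↥L₁ K₁] (A₁ : ValuationSubring K₁) (z : K₁) (hz : z ∈ A₁)
    (hz0 : z ≠ 0) :
    ∃ u ∈ A₁, (∃ v ∈ A₁, u * v = 1) ∧
      ∃ t : K₁, t ∈ L₁ ∧ t ∈ A₁ ∧ z ^ Nat.factorial (Module.finrank ↥L₁ K₁) = u * t := by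
  classical
  set f := Module.finrank ↥L₁ K₁ with hf
  set v := A₁.valuation with hv
  have hdep : ¬ LinearIndependent ↥L₁ (fun i : Fin (f+1) => z ^ (i : ℕ)) := by
    intro h
    have := h.fintype_card_le_finrank
    simp [Fintype.card_fin] at this
    exact lt_irrefl _ this
  rw [Fintype.not_linearIndependent_iff] at hdep
  obtain ⟨g, hsum, i₀, hi₀⟩ := hdep
  set F : Fin (f+1) → K₁ := fun i => (g i : K₁) * z ^ (i : ℕ) with hF
  have hsum' : ∑ i : Fin (f+1), F i = 0 := by
    simpa [hF, Algebra.smul_def, Algebra.algebraMap_ofSubsemiring_apply] using hsum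
  set s : Finset (Fin (f+1)) := Finset.univ.filter (fun i => g i ≠ 0) with hs
  have hsne : s.Nonempty := ⟨i₀, by simp [hs, hi₀]⟩
  have hFsum : ∑ i ∈ s, F i = 0 := by
    rw [← hsum']
    refine Finset.sum_subset (Finset.subset_univ s) ?_
    intro i _ hi
    simp only [hs, Finset.mem_filter, Finset.mem_univ, true_and, not_not] at hi
    simp [hF, hi]
  -- pick the max
  obtain ⟨b, hbs, hbmax⟩ := s.exists_max_image (fun i => v (F i)) hsne
  have hFne : ∀ i ∈ s, F i ≠ 0 := by
    intro i hi
    simp only [hs, Finset.mem_filter, Finset.mem_univ, true_and] at hi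
    exact mul_ne_zero (by exact_mod_cast hi) (pow_ne_zero _ hz0)
  have hvb0 : v (F b) ≠ 0 := by
    rw [Valuation.ne_zero_iff]; exact hFne b hbs
  -- find another index with equal valuation
  have hexa : ∃ a ∈ s, a ≠ b ∧ v (F a) = v (F b) := by
    by_contra hcon
    push_neg at hcon
    have : v (∑ i ∈ s, F i) = v (F b) := by
      refine Valuation.map_sum_eq_of_lt v hbs ?_
      intro i hi
      simp only [Finset.mem_sdiff, Finset.mem_singleton] at hi
      exact lt_of_le_of_ne (hbmax i hi.1) (hcon i hi.1 hi.2)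
    rw [hFsum, map_zero] at this
    exact hvb0 this.symm
  obtain ⟨a, has, hab, hvab⟩ := hexa
  -- wlog a < b as naturals: we need an ordered pair (p, q) with p < q
  obtain ⟨p, q, hps, hqs, hpq, hvpq⟩ :
      ∃ p q : Fin (f+1), p ∈ s ∧ q ∈ s ∧ (p : ℕ) < (q : ℕ) ∧ v (F p) = v (F q) := by
    rcases lt_or_gt_of_ne (fun h : (a : ℕ) = (b : ℕ) => hab (Fin.ext h)) with h | h
    · exact ⟨a, b, has, hbs, h, hvab⟩
    · exact ⟨b, a, hbs, has, h, hvab.symm⟩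
  have hgp : (g p : K₁) ≠ 0 := by
    simp only [hs, Finset.mem_filter] at hps; exact_mod_cast hps.2
  have hgq : (g q : K₁) ≠ 0 := by
    simp only [hs, Finset.mem_filter] at hqs; exact_mod_cast hqs.2
  set m : ℕ := (q : ℕ) - (p : ℕ) with hm
  have hm1 : 1 ≤ m := by omega
  have hmf : m ≤ f := by have := q.isLt; omega
  have hmdvd : m ∣ Nat.factorial f := Nat.dvd_factorial hm1 hmf
  set n : ℕ := Nat.factorial f / m with hn
  have hfn : Nat.factorial f = m * n := (Nat.mul_div_cancel' hmdvd).symm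
  set c : K₁ := (g p : K₁) / (g q : K₁) with hc
  have hc0 : c ≠ 0 := div_ne_zero hgp hgq
  set w : K₁ := z ^ m / c with hw
  have hwF : w = F q / F p := by
    have hq : (q : ℕ) = (p : ℕ) + m := by omega
    simp only [hw, hF, hc, hq, pow_add]
    field_simp
  have hvw : v w = 1 := by
    rw [hwF, map_div₀, ← hvpq, div_self (by rw [Valuation.ne_zero_iff]; exact hFne p hps)]
  have hzm : z ^ m = w * c := by
    rw [hw, div_mul_cancel₀ _ hc0]
  have hzfact : z ^ Nat.factorial f = w ^ n * c ^ n := by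
    rw [hfn, pow_mul, hzm, mul_pow]
  have hcL : c ∈ L₁ := by
    rw [hc]; exact L₁.div_mem (g p).2 (g q).2
  refine ⟨w ^ n, ?_, ⟨(w⁻¹) ^ n, ?_, ?_⟩, c ^ n, pow_mem hcL n, ?_, hzfact⟩
  · rw [← A₁.valuation_le_one_iff, map_pow, hvw, one_pow]
  · rw [← A₁.valuation_le_one_iff, map_pow, map_inv₀, hvw, inv_one, one_pow]
  · rw [← mul_pow, mul_inv_cancel₀ (by rw [hw]; exact div_ne_zero (pow_ne_zero _ hz0) hc0), one_pow]
  · rw [← A₁.valuation_le_one_iff]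
    have : v (c ^ n) = v (z ^ Nat.factorial f) := by
      simp [hzfact, map_mul, map_pow, hvw]
    rw [this]
    exact A₁.valuation_le_one ⟨z ^ Nat.factorial f, pow_mem hz _⟩
end
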